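/- arXiv:2402.07488 — 6 statements merged into one kernel-verified Lean document; each statement's English description precedes it below -/
import Mathlib

section
/- On a fixed pointed vector space version: given null metric hypersurface data at a point, with tensors P, n determined by the relations γ_{ab}n^b = 0, ℓ_a n^a = 1, P^{ab}ℓ_b + ℓ⁽²⁾n^a = 0, P^{ab}γ_{bc} + n^aℓ_c = δ^a_c, the kernel of the energy-momentum map τ(V)^{ab} := (n^aP^{bc} + n^bP^{ac})n^dV_{cd} − P^{ab}n^cn^dV_{cd} − n^an^bP^{cd}V_{cd} on symmetric (0,2)-tensors V (with dimension n ≥ 2) is exactly K₀ = {V : V_{ab}n^b = 0 and P^{ab}V_{ab} = 0}. -/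
open Module LinearMap

variable {V : Type*} [AddCommGroup V] [Module ℝ V] [FiniteDimensional ℝ V]

/-- The trace `P^{ab} W_{ab}` of a (0,2)-tensor `W` against the (2,0)-tensor `P`
(represented as a map `P : V* → V`). -/
noncomputable def trP (P : Dual ℝ V →ₗ[ℝ] V) (W : V →ₗ[ℝ] Dual ℝ V) : ℝ :=
  LinearMap.trace ℝ V (P ∘ₗ W)

/-- The energy-momentum map `τ(W)^{ab} = (n^a P^{bc} + n^b P^{ac}) n^d W_{cd}
  - P^{ab} n^c n^d W_{cd} - n^a n^b P^{cd} W_{cd}`, evaluated on two covectors `ω, χ`. -/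
noncomputable def tau (P : Dual ℝ V →ₗ[ℝ] V) (n : V) (W : V →ₗ[ℝ] Dual ℝ V)
    (ω χ : Dual ℝ V) : ℝ :=
  ω n * χ (P (W n)) + χ n * ω (P (W n)) - W n n * χ (P ω) - ω n * χ n * trP P W

/-- The kernel of the energy-momentum map `τ` on symmetric (0,2)-tensors is exactly
`K₀ = {W : W(n,·) = 0 and tr_P W = 0}`, on null metric hypersurface data of dimension `𝔫 ≥ 2`. -/
theorem kernel_of_energy_momentum_map
    (γ : V →ₗ[ℝ] Dual ℝ V) (ℓ : Dual ℝ V) (l2 : ℝ) (n : V) (P : Dual ℝ V →ₗ[ℝ] V)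
    (𝔫 : ℕ) (hdim : finrank ℝ V = 𝔫) (h𝔫 : 2 ≤ 𝔫)
    (hγsym : ∀ x y, γ x y = γ y x)
    (hγn : γ n = 0)
    (hℓn : ℓ n = 1)
    (hPsym : ∀ ω χ : Dual ℝ V, ω (P χ) = χ (P ω))
    (hPℓ : P ℓ + l2 • n = 0)
    (hPγ : ∀ x : V, P (γ x) + ℓ x • n = x)
    (W : V →ₗ[ℝ] Dual ℝ V) (hWsym : ∀ x y, W x y = W y x) :
    (∀ ω χ : Dual ℝ V, tau P n W ω χ = 0) ↔ (W n = 0 ∧ trP P W = 0) := by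
  constructor
  · intro h
    have hPℓ' : P ℓ = -(l2 • n) := by
      have := hPℓ; linear_combination (norm := abel) this
    -- Step 1 : ∀ ω, (W n)(P ω) = trP P W * ω n
    have step1 : ∀ ω : Dual ℝ V, (W n) (P ω) = trP P W * ω n := by
      intro ω
      have h0 := h ℓ ω
      unfold tau at h0
      rw [hℓn] at h0
      have e1 : ℓ (P (W n)) = (W n) (P ℓ) := hPsym ℓ (W n)
      have e2 : ω (P (W n)) = (W n) (P ω) := hPsym ω (W n)
      have e3 : ω (P ℓ) = -(l2 * ω n) := by rw [hPℓ']; simp [mul_comm]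
      have e4 : (W n) (P ℓ) = -(l2 * (W n) n) := by rw [hPℓ']; simp [mul_comm]
      rw [e1, e2, e4, e3] at h0
      nlinarith [h0]
    -- Step 2 : W n = (W n n) • ℓ
    have hγn' : ∀ x : V, γ x n = 0 := by
      intro x; rw [hγsym x n, hγn]; rfl
    have step2 : ∀ x : V, W n x = ℓ x * W n n := by
      intro x
      have h1 := step1 (γ x)
      have h2 : P (γ x) = x - ℓ x • n := by
        have := hPγ x; linear_combination (norm := abel) this
      rw [h2, hγn' x, mul_zero] at h1
      simp only [map_sub, map_smul, smul_eq_mul] at h1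
      linarith
    -- Step 3 : trP P W = -(l2 * W n n)
    have step3 : trP P W = -(l2 * W n n) := by
      have h1 := step1 ℓ
      have e4 : (W n) (P ℓ) = -(l2 * (W n) n) := by rw [hPℓ']; simp [mul_comm]
      rw [e4, hℓn, mul_one] at h1
      linarith
    -- Step 4 : W n n = 0
    have step4 : W n n = 0 := by
      by_contra hne
      have key : ∀ ω χ : Dual ℝ V, χ (P ω) = -(l2 * ω n * χ n) := by
        intro ω χ
        have h0 := h ω χ
        unfold tau at h0
        have e2 : ∀ ψ : Dual ℝ V, ψ (P (W n)) = -(l2 * W n n * ψ n) := by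
          intro ψ
          have : ψ (P (W n)) = (W n) (P ψ) := hPsym ψ (W n)
          rw [this, step2 (P ψ)]
          have : ℓ (P ψ) = ψ (P ℓ) := hPsym ℓ ψ
          rw [this, hPℓ']
          simp; ring
        rw [e2 ω, e2 χ, step3] at h0
        have h0' : W n n * (χ (P ω) + l2 * ω n * χ n) = 0 := by nlinarith [h0]
        have := mul_eq_zero.mp h0'
        rcases this with h | h
        · exact absurd h hne
        · linarith
      -- every x is a multiple of n
      have hx : ∀ x : V, x = ℓ x • n := by
        intro x
        have h2 : P (γ x) = x - ℓ x • n := by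
          have := hPγ x; linear_combination (norm := abel) this
        have hzero : ∀ χ : Dual ℝ V, χ (x - ℓ x • n) = 0 := by
          intro χ
          have := key (γ x) χ
          rw [h2] at this
          rw [this, hγn' x]; ring
        have : x - ℓ x • n = 0 := by
          rw [← Module.forall_dual_apply_eq_zero_iff ℝ]
          exact hzero
        linear_combination (norm := abel) this
      -- so V is spanned by n, contradicting finrank ≥ 2
      have hsurj : Function.Surjective (LinearMap.toSpanSingleton ℝ V n) := by
        intro x
        exact ⟨ℓ x, (hx x).symm⟩
      have hrange : LinearMap.range (LinearMap.toSpanSingleton ℝ V n) = ⊤ :=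
        LinearMap.range_eq_top.mpr hsurj
      have hle : finrank ℝ V ≤ finrank ℝ ℝ := by
        have := LinearMap.finrank_range_le (LinearMap.toSpanSingleton ℝ V n)
        rwa [hrange, finrank_top] at this
      rw [hdim, Module.finrank_self] at hle
      omega
    have hWn : W n = 0 := by
      ext x
      rw [step2 x, step4]
      simp
    exact ⟨hWn, by rw [step3, step4]; ring⟩
  · rintro ⟨h1, h2⟩ ω χ
    unfold tau
    rw [h1, h2]
    simp
end

section
/- With the setup of the energy-momentum map τ at a point on null metric hypersurface data of dimension n ≥ 2, a symmetric (2,0)-tensor T belongs to the range of τ if and only if there exist a vector X and a scalar Q such that T = 2 n ⊗_s X − Q P, and moreover X and Q are uniquely determined by T. -/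
open Module LinearMap

variable {V : Type*} [AddCommGroup V] [Module ℝ V] [FiniteDimensional ℝ V]

lemma trace_smulRight' (f : V →ₗ[ℝ] ℝ) (x : V) :
    LinearMap.trace ℝ V (f.smulRight x) = f x := by
  have h : f.smulRight x = dualTensorHom ℝ V V (f ⊗ₜ x) := by
    ext m; simp
  rw [h, trace_eq_contract_apply, contractLeft_apply]

/-- A symmetric (2,0)-tensor `T` lies in the range of the energy-momentum map `τ` iff
`T = 2 n ⊗ₛ X - Q P` for some vector `X` and scalar `Q`; moreover `X` and `Q` are
uniquely determined by `T`. -/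
theorem range_of_energy_momentum_map
    (γ : V →ₗ[ℝ] Dual ℝ V) (ℓ : Dual ℝ V) (l2 : ℝ) (n : V) (P : Dual ℝ V →ₗ[ℝ] V)
    (𝔫 : ℕ) (hdim : finrank ℝ V = 𝔫) (h𝔫 : 2 ≤ 𝔫)
    (hγsym : ∀ x y, γ x y = γ y x)
    (hγn : γ n = 0)
    (hℓn : ℓ n = 1)
    (hPsym : ∀ ω χ : Dual ℝ V, ω (P χ) = χ (P ω))
    (hPℓ : P ℓ + l2 • n = 0)
    (hPγ : ∀ x : V, P (γ x) + ℓ x • n = x)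
    (T : Dual ℝ V →ₗ[ℝ] Dual ℝ V →ₗ[ℝ] ℝ) (hTsym : ∀ ω χ, T ω χ = T χ ω) :
    ((∃ W : V →ₗ[ℝ] Dual ℝ V, (∀ x y, W x y = W y x) ∧ ∀ ω χ, tau P n W ω χ = T ω χ) ↔
      (∃ (X : V) (Q : ℝ), ∀ ω χ : Dual ℝ V, T ω χ = ω n * χ X + χ n * ω X - Q * χ (P ω))) ∧
    (∀ (X₁ X₂ : V) (Q₁ Q₂ : ℝ),
      (∀ ω χ : Dual ℝ V, ω n * χ X₁ + χ n * ω X₁ - Q₁ * χ (P ω)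
          = ω n * χ X₂ + χ n * ω X₂ - Q₂ * χ (P ω)) → X₁ = X₂ ∧ Q₁ = Q₂) := by
  have hPℓ' : P ℓ = -(l2 • n) := by linear_combination (norm := module) hPℓ
  have hPγ' : ∀ x : V, P (γ x) = x - ℓ x • n := by
    intro x; linear_combination (norm := module) hPγ x
  have hγn' : ∀ x, γ x n = 0 := by
    intro x; rw [hγsym]; simp [hγn]
  constructor
  · constructor
    · rintro ⟨W, hWsym, hW⟩
      refine ⟨P (W n) - (trP P W / 2) • n, W n n, fun ω χ => ?_⟩
      rw [← hW ω χ]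
      simp only [tau, map_sub, map_smul, smul_eq_mul]
      ring
    · rintro ⟨X, Q, hXQ⟩
      set c : ℝ := (-(Q * l2) - 2 * ℓ X) / ((𝔫 : ℝ) - 1) with hc
      set W : V →ₗ[ℝ] Dual ℝ V :=
        Q • ℓ.smulRight ℓ + (γ X).smulRight ℓ + ℓ.smulRight (γ X) + c • γ with hWdef
      have hWapp : ∀ x, W x = (Q * ℓ x) • ℓ + γ X x • ℓ + ℓ x • γ X + c • γ x := by
        intro x
        simp only [hWdef, LinearMap.add_apply, LinearMap.smul_apply,
          LinearMap.smulRight_apply, smul_smul]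
      have hWsym : ∀ x y, W x y = W y x := by
        intro x y
        simp only [hWapp, LinearMap.add_apply, LinearMap.smul_apply, smul_eq_mul]
        rw [hγsym x y, hγsym X x, hγsym X y]
        ring
      -- key evaluations
      have hWn : W n = Q • ℓ + γ X := by
        rw [hWapp]; rw [hℓn, hγn' X, hγn]
        simp
      have hPWn : P (W n) = X + (-(Q * l2) - ℓ X) • n := by
        rw [hWn]
        simp only [map_add, map_smul, hPℓ', hPγ' X]
        module
      have hWnn : W n n = Q := by
        rw [hWn]; simp [hℓn, hγn' X]
      -- trace computation
      have hPW : P ∘ₗ W = Q • ℓ.smulRight (P ℓ) + (γ X).smulRight (P ℓ)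
          + ℓ.smulRight (P (γ X)) + c • (P ∘ₗ γ) := by
        ext x; simp [hWapp, mul_smul]
      have hPγcomp : P ∘ₗ γ = LinearMap.id - ℓ.smulRight n := by
        ext x; simp [hPγ' x]
      have htr : trP P W = -(Q * l2) + c * ((𝔫 : ℝ) - 1) := by
        rw [trP, hPW]
        simp only [map_add, map_smul, trace_smulRight', hPγcomp, map_sub, trace_id,
          smul_eq_mul]
        rw [hPℓ', hPγ' X, hdim]
        simp only [map_neg, map_smul, map_sub, smul_eq_mul, hℓn, hγn' X]
        ring
      have hne : ((𝔫 : ℝ) - 1) ≠ 0 := by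
        have : (2 : ℝ) ≤ (𝔫 : ℝ) := by exact_mod_cast h𝔫
        linarith
      have hcval : c * ((𝔫 : ℝ) - 1) = -(Q * l2) - 2 * ℓ X := by
        rw [hc, div_mul_cancel₀ _ hne]
      refine ⟨W, hWsym, fun ω χ => ?_⟩
      rw [hXQ ω χ]
      simp only [tau, hPWn, hWnn, htr, map_add, map_smul, smul_eq_mul]
      rw [hcval]
      ring
  · -- uniqueness
    intro X₁ X₂ Q₁ Q₂ h
    have hD : ∀ ω χ : Dual ℝ V,
        ω n * χ (X₁ - X₂) + χ n * ω (X₁ - X₂) = (Q₁ - Q₂) * χ (P ω) := by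
      intro ω χ
      have := h ω χ
      simp only [map_sub]
      ring_nf
      linarith [h ω χ]
    -- plug ω = ℓ to get X₁ - X₂ ∈ span n
    have hDn : X₁ - X₂ = (-(ℓ (X₁ - X₂)) - (Q₁ - Q₂) * l2) • n := by
      have hz : ∀ χ : Dual ℝ V,
          χ ((X₁ - X₂) - (-(ℓ (X₁ - X₂)) - (Q₁ - Q₂) * l2) • n) = 0 := by
        intro χ
        have := hD ℓ χ
        rw [hℓn, hPℓ'] at this
        simp only [map_sub, map_smul, map_neg, smul_eq_mul] at this ⊢
        linarith
      have := (Module.forall_dual_apply_eq_zero_iff ℝ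
        ((X₁ - X₂) - (-(ℓ (X₁ - X₂)) - (Q₁ - Q₂) * l2) • n)).mp hz
      linear_combination (norm := module) this
    set d : ℝ := -(ℓ (X₁ - X₂)) - (Q₁ - Q₂) * l2 with hd
    have hD2 : ∀ ω χ : Dual ℝ V, 2 * d * (ω n * χ n) = (Q₁ - Q₂) * χ (P ω) := by
      intro ω χ
      have := hD ω χ
      rw [hDn] at this
      simp only [map_smul, smul_eq_mul] at this
      linarith
    have hQ : Q₁ = Q₂ := by
      by_contra hq
      have hq' : Q₁ - Q₂ ≠ 0 := sub_ne_zero.mpr hq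
      -- then χ (P ω) = (2d/(Q₁-Q₂)) ω n χ n for all ω χ; apply to ω = γ x
      have hx : ∀ x : V, x = ℓ x • n := by
        intro x
        have hz : ∀ χ : Dual ℝ V, χ (x - ℓ x • n) = 0 := by
          intro χ
          have h1 := hD2 (γ x) χ
          rw [hγn' x, hPγ' x] at h1
          simp only [map_sub, map_smul, smul_eq_mul, mul_zero, zero_mul] at h1 ⊢
          have := mul_left_cancel₀ hq' (by linarith : (Q₁ - Q₂) * (χ x - ℓ x * χ n)
            = (Q₁ - Q₂) * 0)
          linarith [this]
        have := (Module.forall_dual_apply_eq_zero_iff ℝ (x - ℓ x • n)).mp hz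
        linear_combination (norm := module) this
      -- contradiction with finrank ≥ 2
      have hrank : finrank ℝ V ≤ 1 := by
        have hspan : ⊤ ≤ Submodule.span ℝ {n} := by
          intro x _
          rw [hx x]
          exact Submodule.smul_mem _ _ (Submodule.mem_span_singleton_self n)
        calc finrank ℝ V = finrank ℝ (⊤ : Submodule ℝ V) := (finrank_top ℝ V).symm
          _ ≤ finrank ℝ (Submodule.span ℝ {n}) := Submodule.finrank_mono hspan
          _ = 1 := finrank_span_singleton (by intro h0; rw [h0, map_zero] at hℓn; norm_num at hℓn)
      omega
    have hd0 : d = 0 := by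
      have := hD2 ℓ ℓ
      rw [hℓn, hQ, sub_self, zero_mul] at this
      linarith
    have hX : X₁ = X₂ := by
      have := hDn
      rw [hd0, zero_smul, sub_eq_zero] at this
      exact this
    exact ⟨hX, hQ⟩
end

section
/- With the energy-momentum map τ on null metric hypersurface data of dimension n ≥ 2 at a point, for T = 2n⊗_sX − QP in the range of τ, the tensor V := 2ℓ⊗_s γ(X,·) + Q ℓ⊗ℓ − (1/(n−1))(Qℓ⁽²⁾ + 2ℓ(X)) γ satisfies τ(V) = T, and the full preimage τ⁻¹(T) equals {V + V^H : V^H ∈ K₀} where K₀ = {W symmetric : W(n,·)=0, tr_P W = 0} is the kernel of τ. -/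
open Module LinearMap

variable {V : Type*} [AddCommGroup V] [Module ℝ V] [FiniteDimensional ℝ V]

/-- The particular solution `V_T = 2ℓ ⊗ₛ γ(X,·) + Q ℓ⊗ℓ - (Qℓ⁽²⁾ + 2ℓ(X))/(𝔫-1) γ`. -/
noncomputable def particularSolution (γ : V →ₗ[ℝ] Dual ℝ V) (ℓ : Dual ℝ V) (l2 : ℝ)
    (𝔫 : ℕ) (X : V) (Q : ℝ) : V →ₗ[ℝ] Dual ℝ V :=
  ℓ.smulRight (γ X) + (γ X).smulRight ℓ + Q • ℓ.smulRight ℓ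
    - ((Q * l2 + 2 * ℓ X) / ((𝔫 : ℝ) - 1)) • γ

/-!
`τ` is linear, so `τ⁻¹(T) = V_T + ker τ` as soon as `τ(V_T) = T`; the latter is a direct
computation from `P(γ(X,·)) = X - ℓ(X) n`, `P(ℓ) = -ℓ⁽²⁾ n` and `tr(P ∘ γ) = 𝔫 - 1`.
For the kernel, let `τ(D) = 0`. On two covectors `γ(x,·)`, `γ(y,·)` annihilating `n`,
`τ(D)` reduces to `-D(n,n) γ(x,y)`, and `γ ≠ 0` when `𝔫 ≥ 2`, so `D(n,n) = 0`. Evaluating on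
`ω = ℓ` shows that `P(D(n,·))` is a multiple of `n`, hence `D(n,·) = D(n,n) ℓ = 0`; finally
`τ(D)(ℓ,ℓ) = -tr_P D`.
-/

omit [FiniteDimensional ℝ V] in
lemma tau_sub (P : Dual ℝ V →ₗ[ℝ] V) (n : V) (W₁ W₂ : V →ₗ[ℝ] Dual ℝ V) (ω χ : Dual ℝ V) :
    tau P n (W₁ - W₂) ω χ = tau P n W₁ ω χ - tau P n W₂ ω χ := by
  simp only [tau, trP, comp_sub, map_sub, LinearMap.sub_apply]
  ring

lemma trace_comp_smulRight {R M N : Type*} [CommRing R] [AddCommGroup M] [Module R M]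
    [Module.Free R M] [Module.Finite R M] [AddCommGroup N] [Module R N]
    (A : N →ₗ[R] M) (f : M →ₗ[R] R) (u : N) :
    trace R M (A ∘ₗ f.smulRight u) = f (A u) := by
  rw [show A ∘ₗ f.smulRight u = f.smulRight (A u) by ext; simp, trace_smulRight]

/-- The algebraic conditions on null metric hypersurface data `{γ, ℓ, ℓ⁽²⁾}` at a point,
with `n` and `P` the tensors determined by them. -/
structure IsNullData (γ : V →ₗ[ℝ] Dual ℝ V) (ℓ : Dual ℝ V) (l2 : ℝ) (n : V)
    (P : Dual ℝ V →ₗ[ℝ] V) : Prop where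
  γ_symm : ∀ x y, γ x y = γ y x
  γ_n : γ n = 0
  ℓ_n : ℓ n = 1
  P_symm : ∀ ω χ : Dual ℝ V, ω (P χ) = χ (P ω)
  P_ℓ : P ℓ + l2 • n = 0
  P_γ : ∀ x : V, P (γ x) + ℓ x • n = x

namespace IsNullData

omit [FiniteDimensional ℝ V]

variable {γ : V →ₗ[ℝ] Dual ℝ V} {ℓ : Dual ℝ V} {l2 : ℝ} {n : V} {P : Dual ℝ V →ₗ[ℝ] V}

lemma P_γ_apply (h : IsNullData γ ℓ l2 n P) (x : V) : P (γ x) = x - ℓ x • n :=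
  eq_sub_of_add_eq (h.P_γ x)

lemma P_ℓ_eq (h : IsNullData γ ℓ l2 n P) : P ℓ = -(l2 • n) :=
  eq_neg_of_add_eq_zero_left h.P_ℓ

lemma γ_apply_n (h : IsNullData γ ℓ l2 n P) (x : V) : γ x n = 0 := by
  rw [h.γ_symm, h.γ_n, LinearMap.zero_apply]

lemma γ_P_apply (h : IsNullData γ ℓ l2 n P) (ω : Dual ℝ V) : γ (P ω) = ω - ω n • ℓ := by
  ext x
  rw [h.γ_symm, h.P_symm, h.P_γ_apply]
  simp [mul_comm]

lemma P_comp_γ (h : IsNullData γ ℓ l2 n P) : P ∘ₗ γ = LinearMap.id - ℓ.smulRight n := by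
  ext x
  simp [h.P_γ_apply]

lemma γ_ne_zero (h : IsNullData γ ℓ l2 n P) (hV : 2 ≤ finrank ℝ V) : γ ≠ 0 := by
  intro hγ
  have hspan : ∀ x : V, ℓ x • n = x := fun x => by simpa [hγ] using h.P_γ x
  have := finrank_le_one n fun x => ⟨ℓ x, hspan x⟩
  omega

section Kernel

variable (h : IsNullData γ ℓ l2 n P) {D : V →ₗ[ℝ] Dual ℝ V}
include h

lemma apply_n_n_eq_zero_of_tau (hV : 2 ≤ finrank ℝ V) (hD : ∀ ω χ, tau P n D ω χ = 0) :
    D n n = 0 := by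
  obtain ⟨x, hx⟩ := DFunLike.ne_iff.mp (h.γ_ne_zero hV)
  obtain ⟨y, hxy⟩ := DFunLike.ne_iff.mp hx
  have hτ := hD (γ x) (γ y)
  simp only [tau, h.γ_apply_n, h.P_γ_apply, map_sub, map_smul, smul_eq_mul, zero_mul,
    mul_zero, zero_add, zero_sub, sub_zero, neg_eq_zero, h.γ_symm y x] at hτ
  exact (mul_eq_zero.mp hτ).resolve_right (by simpa using hxy)

lemma P_apply_n_of_tau (hD : ∀ ω χ, tau P n D ω χ = 0) :
    P (D n) = (trP P D - D n n * l2 - ℓ (P (D n))) • n := by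
  rw [← sub_eq_zero, ← forall_dual_apply_eq_zero_iff ℝ]
  intro χ
  have hτ := hD ℓ χ
  simp only [tau, h.ℓ_n, h.P_ℓ_eq, map_neg, map_smul, smul_eq_mul, one_mul] at hτ
  simp only [map_sub, map_smul, smul_eq_mul]
  linear_combination hτ

lemma apply_n_eq_zero_of_tau (hV : 2 ≤ finrank ℝ V) (hD : ∀ ω χ, tau P n D ω χ = 0) :
    D n = 0 := by
  have := h.γ_P_apply (D n)
  rw [h.P_apply_n_of_tau hD, map_smul, h.γ_n, smul_zero, h.apply_n_n_eq_zero_of_tau hV hD,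
    zero_smul, sub_zero] at this
  exact this.symm

lemma tau_eq_zero_iff (hV : 2 ≤ finrank ℝ V) :
    (∀ ω χ, tau P n D ω χ = 0) ↔ D n = 0 ∧ trP P D = 0 := by
  constructor
  · intro hD
    have hDn := h.apply_n_eq_zero_of_tau hV hD
    refine ⟨hDn, ?_⟩
    simpa [tau, hDn, h.ℓ_n] using hD ℓ ℓ
  · rintro ⟨hDn, htr⟩ ω χ
    simp [tau, hDn, htr]

end Kernel

section ParticularSolution

variable (h : IsNullData γ ℓ l2 n P) {𝔫 : ℕ} (X : V) (Q : ℝ)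
include h

lemma particularSolution_apply_n : particularSolution γ ℓ l2 𝔫 X Q n = γ X + Q • ℓ := by
  simp [particularSolution, h.ℓ_n, h.γ_n, h.γ_apply_n]

lemma P_particularSolution_apply_n :
    P (particularSolution γ ℓ l2 𝔫 X Q n) = X - (ℓ X + Q * l2) • n := by
  rw [h.particularSolution_apply_n, map_add, map_smul, h.P_γ_apply, h.P_ℓ_eq]
  module

variable [FiniteDimensional ℝ V]

lemma trace_P_comp_γ : trace ℝ V (P ∘ₗ γ) = (finrank ℝ V : ℝ) - 1 := by
  rw [h.P_comp_γ, map_sub, trace_id, trace_smulRight, h.ℓ_n]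

lemma trP_particularSolution (hdim : finrank ℝ V = 𝔫) (h𝔫 : 𝔫 ≠ 1) :
    trP P (particularSolution γ ℓ l2 𝔫 X Q) = -(2 * Q * l2) - 2 * ℓ X := by
  have h𝔫' : (𝔫 : ℝ) - 1 ≠ 0 := sub_ne_zero.mpr (by exact_mod_cast h𝔫)
  simp only [trP, particularSolution, comp_add, comp_sub, comp_smul, map_add, map_sub,
    map_smul, trace_comp_smulRight, h.trace_P_comp_γ, hdim, h.P_γ_apply, h.P_ℓ_eq,
    map_neg, h.ℓ_n, h.γ_apply_n, smul_eq_mul]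
  field_simp
  ring

lemma tau_particularSolution (hdim : finrank ℝ V = 𝔫) (h𝔫 : 𝔫 ≠ 1) (ω χ : Dual ℝ V) :
    tau P n (particularSolution γ ℓ l2 𝔫 X Q) ω χ = ω n * χ X + χ n * ω X - Q * χ (P ω) := by
  have hnn : particularSolution γ ℓ l2 𝔫 X Q n n = Q := by
    simp [h.particularSolution_apply_n, h.γ_apply_n, h.ℓ_n]
  rw [tau, hnn, h.P_particularSolution_apply_n, h.trP_particularSolution X Q hdim h𝔫]
  simp only [map_sub, map_smul, smul_eq_mul]
  ring

end ParticularSolution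

end IsNullData

/-- For `T = 2n ⊗ₛ X - Q P` in the range of `τ`, the explicit tensor
`V_T := 2ℓ⊗ₛX̂ + Qℓ⊗ℓ - (1/(𝔫-1))(Qℓ⁽²⁾ + 2ℓ(X))γ` satisfies `τ(V_T) = T`, and the full
preimage of `T` consists exactly of `V_T + V^H` with `V^H` in the kernel
`K₀ = {W : W(n,·)=0, tr_P W = 0}` of `τ`. -/
theorem preimage_of_energy_momentum_map
    (γ : V →ₗ[ℝ] Dual ℝ V) (ℓ : Dual ℝ V) (l2 : ℝ) (n : V) (P : Dual ℝ V →ₗ[ℝ] V)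
    (𝔫 : ℕ) (hdim : finrank ℝ V = 𝔫) (h𝔫 : 2 ≤ 𝔫)
    (hγsym : ∀ x y, γ x y = γ y x)
    (hγn : γ n = 0)
    (hℓn : ℓ n = 1)
    (hPsym : ∀ ω χ : Dual ℝ V, ω (P χ) = χ (P ω))
    (hPℓ : P ℓ + l2 • n = 0)
    (hPγ : ∀ x : V, P (γ x) + ℓ x • n = x)
    (X : V) (Q : ℝ) :
    (∀ ω χ : Dual ℝ V, tau P n (particularSolution γ ℓ l2 𝔫 X Q) ω χ
        = ω n * χ X + χ n * ω X - Q * χ (P ω)) ∧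
    (∀ W : V →ₗ[ℝ] Dual ℝ V, (∀ x y, W x y = W y x) →
      ((∀ ω χ : Dual ℝ V, tau P n W ω χ = ω n * χ X + χ n * ω X - Q * χ (P ω)) ↔
        ((W - particularSolution γ ℓ l2 𝔫 X Q) n = 0 ∧
          trP P (W - particularSolution γ ℓ l2 𝔫 X Q) = 0))) := by
  have h : IsNullData γ ℓ l2 n P := ⟨hγsym, hγn, hℓn, hPsym, hPℓ, hPγ⟩
  have hVT := h.tau_particularSolution X Q hdim (by omega)
  refine ⟨hVT, fun W _ => ?_⟩
  rw [← h.tau_eq_zero_iff (hdim ▸ h𝔫)]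
  simp only [tau_sub, hVT, sub_eq_zero]
end

section
/- Every symmetric (0,2)-tensor V on null metric hypersurface data of dimension n ≥ 2 decomposes uniquely as V = 2ℓ⊗_s ŵ + Q_V(ℓ⊗ℓ + (1/(n−1))ℓ⁽²⁾γ) + (tr_P V/(n−1))γ + V^H, where Q_V := V(n,n), ŵ := ι_nV − Q_V ℓ (which satisfies ŵ(n)=0), and V^H lies in the kernel K₀ of the energy-momentum map τ. -/
open Module LinearMap

variable {V : Type*} [AddCommGroup V] [Module ℝ V] [FiniteDimensional ℝ V]

/-! The decomposition is forced: contracting with `n` recovers `ι_n W`, and `tr_P` recovers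
`tr_P W` because `tr_P γ = 𝔫 - 1` while `tr_P (ℓ ⊗ ℓ) = -ℓ⁽²⁾` and `tr_P (ℓ ⊗ₛ ŵ) = ŵ(P ℓ) = 0`.
Hence `W^H` must be `W` minus the explicit part, which does lie in `K₀`. -/

section

omit [FiniteDimensional ℝ V]

variable {γ : V →ₗ[ℝ] Dual ℝ V} {ℓ : Dual ℝ V} {l2 : ℝ} {n : V} (P : Dual ℝ V →ₗ[ℝ] V)

@[simp]
lemma trP_add (A B : V →ₗ[ℝ] Dual ℝ V) : trP P (A + B) = trP P A + trP P B := by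
  simp [trP, comp_add]

@[simp]
lemma trP_sub (A B : V →ₗ[ℝ] Dual ℝ V) : trP P (A - B) = trP P A - trP P B := by
  simp [trP, comp_sub]

@[simp]
lemma trP_smul (c : ℝ) (A : V →ₗ[ℝ] Dual ℝ V) : trP P (c • A) = c * trP P A := by
  simp [trP, comp_smul]

lemma sub_smul_apply_eq_zero (W : V →ₗ[ℝ] Dual ℝ V) (hℓn : ℓ n = 1) :
    (W n - W n n • ℓ) n = 0 := by
  simp [hℓn]

/-- `W - W^H = 2ℓ⊗ₛŵ + Q_W (ℓ⊗ℓ + ℓ⁽²⁾γ/(𝔫-1)) + (tr_P W/(𝔫-1)) γ`. -/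
noncomputable def canonicalPart (γ : V →ₗ[ℝ] Dual ℝ V) (ℓ : Dual ℝ V) (l2 : ℝ) (n : V)
    (W : V →ₗ[ℝ] Dual ℝ V) : V →ₗ[ℝ] Dual ℝ V :=
  ℓ.smulRight (W n - W n n • ℓ) + (W n - W n n • ℓ).smulRight ℓ
    + W n n • (ℓ.smulRight ℓ + (l2 / ((finrank ℝ V : ℝ) - 1)) • γ)
    + (trP P W / ((finrank ℝ V : ℝ) - 1)) • γ

lemma canonicalPart_apply (hγn : γ n = 0) (hℓn : ℓ n = 1) (W : V →ₗ[ℝ] Dual ℝ V) :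
    canonicalPart P γ ℓ l2 n W n = W n := by
  simp only [canonicalPart, LinearMap.add_apply, LinearMap.smul_apply, smulRight_apply,
    sub_smul_apply_eq_zero W hℓn, hℓn, hγn]
  module

end

section

variable {γ : V →ₗ[ℝ] Dual ℝ V} {ℓ : Dual ℝ V} {l2 : ℝ} {n : V} {P : Dual ℝ V →ₗ[ℝ] V}

@[simp]
lemma trP_smulRight (f ω : Dual ℝ V) :
    trP P (f.smulRight ω) = f (P ω) := by
  have h : P ∘ₗ f.smulRight ω = f.smulRight (P ω) := by ext; simp
  rw [trP, h, trace_smulRight]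

lemma trP_eq_finrank_sub_one (hℓn : ℓ n = 1) (hPγ : ∀ x, P (γ x) + ℓ x • n = x) :
    trP P γ = finrank ℝ V - 1 := by
  have h : P ∘ₗ γ = LinearMap.id - ℓ.smulRight n := by
    ext x
    simp only [LinearMap.comp_apply, LinearMap.sub_apply, id_apply, smulRight_apply]
    exact eq_sub_of_add_eq (hPγ x)
  rw [trP, h, map_sub, trace_id, trace_smulRight, hℓn]

lemma trP_canonicalPart (hdim : (finrank ℝ V : ℝ) - 1 ≠ 0) (hℓn : ℓ n = 1)
    (hPsym : ∀ ω χ : Dual ℝ V, ω (P χ) = χ (P ω)) (hPℓ : P ℓ + l2 • n = 0)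
    (hPγ : ∀ x, P (γ x) + ℓ x • n = x) (W : V →ₗ[ℝ] Dual ℝ V) :
    trP P (canonicalPart P γ ℓ l2 n W) = trP P W := by
  have hPℓ' : P ℓ = -(l2 • n) := eq_neg_of_add_eq_zero_left hPℓ
  simp only [canonicalPart, trP_add, trP_smul, trP_smulRight, trP_eq_finrank_sub_one hℓn hPγ,
    hPsym ℓ, hPℓ', map_neg, map_smul, sub_smul_apply_eq_zero W hℓn, hℓn]
  field_simp
  ring

end

theorem canonical_decomposition_of_symmetric_tensor_general
    (γ : V →ₗ[ℝ] Dual ℝ V) (ℓ : Dual ℝ V) (l2 : ℝ) (n : V) (P : Dual ℝ V →ₗ[ℝ] V)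
    (𝔫 : ℕ) (hdim : finrank ℝ V = 𝔫) (h𝔫 : 2 ≤ 𝔫)
    (hγn : γ n = 0)
    (hℓn : ℓ n = 1)
    (hPsym : ∀ ω χ : Dual ℝ V, ω (P χ) = χ (P ω))
    (hPℓ : P ℓ + l2 • n = 0)
    (hPγ : ∀ x : V, P (γ x) + ℓ x • n = x)
    (W : V →ₗ[ℝ] Dual ℝ V) :
    (W n - W n n • ℓ) n = 0 ∧
    (∃! H : V →ₗ[ℝ] Dual ℝ V, (H n = 0 ∧ trP P H = 0) ∧
      W = ℓ.smulRight (W n - W n n • ℓ) + (W n - W n n • ℓ).smulRight ℓ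
        + W n n • (ℓ.smulRight ℓ + (l2 / ((𝔫 : ℝ) - 1)) • γ)
        + (trP P W / ((𝔫 : ℝ) - 1)) • γ + H) := by
  subst hdim
  have hne : (finrank ℝ V : ℝ) - 1 ≠ 0 := by
    have : (2 : ℝ) ≤ finrank ℝ V := by exact_mod_cast h𝔫
    linarith
  set R := canonicalPart P γ ℓ l2 n W
  refine ⟨sub_smul_apply_eq_zero W hℓn, W - R, ⟨⟨?_, ?_⟩, (add_sub_cancel R W).symm⟩, ?_⟩
  · rw [LinearMap.sub_apply, canonicalPart_apply P hγn hℓn, sub_self]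
  · rw [trP_sub, trP_canonicalPart hne hℓn hPsym hPℓ hPγ, sub_self]
  · rintro H ⟨-, hW⟩
    exact eq_sub_of_add_eq' (c := R) hW.symm

/-- Every symmetric (0,2)-tensor `W` decomposes uniquely as
`W = 2ℓ⊗ₛŵ + Q_W (ℓ⊗ℓ + ℓ⁽²⁾γ/(𝔫-1)) + (tr_P W/(𝔫-1)) γ + W^H`
with `Q_W = W(n,n)`, `ŵ = ι_n W - Q_W ℓ` (which annihilates `n`) and `W^H` in the kernel
`K₀ = {H : H(n,·)=0, tr_P H = 0}` of the energy-momentum map. -/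
theorem canonical_decomposition_of_symmetric_tensor
    (γ : V →ₗ[ℝ] Dual ℝ V) (ℓ : Dual ℝ V) (l2 : ℝ) (n : V) (P : Dual ℝ V →ₗ[ℝ] V)
    (𝔫 : ℕ) (hdim : finrank ℝ V = 𝔫) (h𝔫 : 2 ≤ 𝔫)
    (hγsym : ∀ x y, γ x y = γ y x)
    (hγn : γ n = 0)
    (hℓn : ℓ n = 1)
    (hPsym : ∀ ω χ : Dual ℝ V, ω (P χ) = χ (P ω))
    (hPℓ : P ℓ + l2 • n = 0)
    (hPγ : ∀ x : V, P (γ x) + ℓ x • n = x)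
    (W : V →ₗ[ℝ] Dual ℝ V) (hWsym : ∀ x y, W x y = W y x) :
    (W n - W n n • ℓ) n = 0 ∧
    (∃! H : V →ₗ[ℝ] Dual ℝ V, (H n = 0 ∧ trP P H = 0) ∧
      W = ℓ.smulRight (W n - W n n • ℓ) + (W n - W n n • ℓ).smulRight ℓ
        + W n n • (ℓ.smulRight ℓ + (l2 / ((𝔫 : ℝ) - 1)) • γ)
        + (trP P W / ((𝔫 : ℝ) - 1)) • γ + H) :=
  canonical_decomposition_of_symmetric_tensor_general γ ℓ l2 n P 𝔫 hdim h𝔫 hγn hℓn hPsym hPℓ hPγ W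
end

section
/- Under the gauge action on null metric hypersurface data, the derived tensors transform as G_{(z,ζ)}(P) = P − 2n⊗_sζ and G_{(z,ζ)}(n) = z⁻¹n; that is, if (γ,ℓ',ℓ⁽²⁾') = (γ, z(ℓ+γ(ζ,·)), z²(ℓ⁽²⁾+2ℓ(ζ)+γ(ζ,ζ))), then the unique P', n' satisfying the four defining contraction relations with the primed data are P' = P − n⊗ζ − ζ⊗n and n' = z⁻¹n. -/
/-! The transformed tensors satisfy the four relations by direct computation. For uniqueness,
`n` is pinned down because the radical of `γ` is a line on which `ℓ` is normalised; `P` is then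
fixed on `γ(V)` and on `ℓ`, and these span the dual because any symmetric `P` obeying the last
relation gives `ω = γ(P ω) + ω(n) ℓ`. -/

open Module LinearMap

section

variable {V : Type*} [AddCommGroup V] [Module ℝ V]

/-- `(P, n)` is the inverse of the matrix `𝒜 = (γ ℓ; ℓ ℓ⁽²⁾)` of null metric hypersurface data,
whose remaining entry `n⁽²⁾` vanishes. -/
structure IsNullDataInverse (γ : V →ₗ[ℝ] Dual ℝ V) (ℓ : Dual ℝ V) (l2 : ℝ)
    (P : Dual ℝ V →ₗ[ℝ] V) (n : V) : Prop where
  gamma_n : γ n = 0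
  ell_n : ℓ n = 1
  P_ell : P ℓ + l2 • n = 0
  P_gamma : ∀ x, P (γ x) + ℓ x • n = x

variable {γ : V →ₗ[ℝ] Dual ℝ V} {ℓ : Dual ℝ V} {l2 : ℝ}

theorem eq_gamma_add_smul_of_symm {P : Dual ℝ V →ₗ[ℝ] V} {n : V}
    (hγ : ∀ x y, γ x y = γ y x) (hP : ∀ ω χ : Dual ℝ V, ω (P χ) = χ (P ω))
    (hPγ : ∀ x, P (γ x) + ℓ x • n = x) (ω : Dual ℝ V) :
    ω = γ (P ω) + ω n • ℓ := by
  ext x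
  have hPγx : ω (P (γ x)) + ℓ x * ω n = ω x := by
    rw [← smul_eq_mul, ← map_smul, ← map_add, hPγ x]
  calc ω x = ω (P (γ x)) + ω n * ℓ x := by rw [← hPγx, mul_comm]
    _ = (γ (P ω) + ω n • ℓ) x := by
      simp only [hP, hγ x, LinearMap.add_apply, LinearMap.smul_apply, smul_eq_mul]

namespace IsNullDataInverse

theorem n_eq {P₁ P₂ : Dual ℝ V →ₗ[ℝ] V} {n₁ n₂ m : V}
    (h₁ : IsNullDataInverse γ ℓ l2 P₁ n₁) (h₂ : IsNullDataInverse γ ℓ l2 P₂ n₂)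
    (hrad : ∀ x, γ x = 0 → ∃ c : ℝ, x = c • m) : n₂ = n₁ := by
  obtain ⟨c₁, rfl⟩ := hrad n₁ h₁.gamma_n
  obtain ⟨c₂, rfl⟩ := hrad n₂ h₂.gamma_n
  have e₁ : c₁ * ℓ m = 1 := by simpa using h₁.ell_n
  have e₂ : c₂ * ℓ m = 1 := by simpa using h₂.ell_n
  rw [mul_right_cancel₀ (right_ne_zero_of_mul_eq_one e₁) (e₂.trans e₁.symm)]

theorem P_eq_of_symm {P₁ P₂ : Dual ℝ V →ₗ[ℝ] V} {n : V}
    (h₁ : IsNullDataInverse γ ℓ l2 P₁ n) (h₂ : IsNullDataInverse γ ℓ l2 P₂ n)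
    (hγ : ∀ x y, γ x y = γ y x) (hP₁ : ∀ ω χ : Dual ℝ V, ω (P₁ χ) = χ (P₁ ω)) : P₁ = P₂ := by
  have hPγ : ∀ x, P₁ (γ x) = P₂ (γ x) := fun x =>
    add_right_cancel ((h₁.P_gamma x).trans (h₂.P_gamma x).symm)
  have hPℓ : P₁ ℓ = P₂ ℓ := add_right_cancel (h₁.P_ell.trans h₂.P_ell.symm)
  ext ω
  rw [eq_gamma_add_smul_of_symm hγ hP₁ h₁.P_gamma ω]
  simp only [map_add, map_smul, hPγ, hPℓ]

theorem unique {P₁ P₂ : Dual ℝ V →ₗ[ℝ] V} {n₁ n₂ m : V}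
    (h₁ : IsNullDataInverse γ ℓ l2 P₁ n₁) (h₂ : IsNullDataInverse γ ℓ l2 P₂ n₂)
    (hγ : ∀ x y, γ x y = γ y x) (hrad : ∀ x, γ x = 0 → ∃ c : ℝ, x = c • m)
    (hP₂ : ∀ ω χ : Dual ℝ V, ω (P₂ χ) = χ (P₂ ω)) : P₂ = P₁ ∧ n₂ = n₁ := by
  obtain rfl := h₁.n_eq h₂ hrad
  exact ⟨h₂.P_eq_of_symm h₁ hγ hP₂, rfl⟩

theorem gauge {P : Dual ℝ V →ₗ[ℝ] V} {n : V} (h : IsNullDataInverse γ ℓ l2 P n)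
    (hγ : ∀ x y, γ x y = γ y x) {z : ℝ} (hz : z ≠ 0) (ζ : V) :
    IsNullDataInverse γ (z • (ℓ + γ ζ)) (z ^ 2 * (l2 + 2 * ℓ ζ + γ ζ ζ))
      (P - (Dual.eval ℝ V ζ).smulRight n - (Dual.eval ℝ V n).smulRight ζ) (z⁻¹ • n) := by
  have hγn : ∀ x, γ x n = 0 := fun x => by rw [hγ, h.gamma_n, LinearMap.zero_apply]
  have hPℓ : P ℓ = -(l2 • n) := eq_neg_of_add_eq_zero_left h.P_ell
  have hPγ : ∀ x, P (γ x) = x - ℓ x • n := fun x => eq_sub_of_add_eq (h.P_gamma x)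
  constructor
  · rw [map_smul, h.gamma_n, smul_zero]
  · simp [h.ell_n, hγn, hz]
  · simp only [LinearMap.sub_apply, smulRight_apply, Dual.eval_apply, map_smul, map_add,
      hPℓ, hPγ, h.ell_n, hγn, smul_smul]
    match_scalars <;> field_simp <;> ring
  · intro x
    simp only [LinearMap.sub_apply, smulRight_apply, Dual.eval_apply,
      LinearMap.add_apply, LinearMap.smul_apply, hPγ, hγn, hγ x ζ, smul_smul]
    match_scalars <;> field_simp <;> ring

end IsNullDataInverse

end

variable {V : Type*} [AddCommGroup V] [Module ℝ V] [FiniteDimensional ℝ V]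

theorem gauge_transformation_of_P_and_n_general
    (γ : V →ₗ[ℝ] Dual ℝ V) (ℓ : Dual ℝ V) (l2 : ℝ) (n : V) (P : Dual ℝ V →ₗ[ℝ] V)
    (hγsym : ∀ x y, γ x y = γ y x)
    (hrad : ∀ x : V, γ x = 0 → ∃ c : ℝ, x = c • n)
    (hγn : γ n = 0)
    (hℓn : ℓ n = 1)
    (hPℓ : P ℓ + l2 • n = 0)
    (hPγ : ∀ x : V, P (γ x) + ℓ x • n = x)
    (z : ℝ) (hz : z ≠ 0) (ζ : V)
    -- the gauge-transformed data and the claimed transformed tensors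
    (ℓ' : Dual ℝ V) (hℓ' : ℓ' = z • (ℓ + γ ζ))
    (l2' : ℝ) (hl2' : l2' = z ^ 2 * (l2 + 2 * ℓ ζ + γ ζ ζ))
    (P' : Dual ℝ V →ₗ[ℝ] V)
    (hP' : P' = P - (Dual.eval ℝ V ζ).smulRight n - (Dual.eval ℝ V n).smulRight ζ)
    (n' : V) (hn' : n' = z⁻¹ • n) :
    -- P', n' satisfy the four defining relations for the primed data
    (γ n' = 0 ∧ ℓ' n' = 1 ∧ P' ℓ' + l2' • n' = 0 ∧ ∀ x : V, P' (γ x) + ℓ' x • n' = x) ∧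
    -- and they are the unique tensors doing so
    (∀ (P'' : Dual ℝ V →ₗ[ℝ] V) (n'' : V),
      γ n'' = 0 → ℓ' n'' = 1 → P'' ℓ' + l2' • n'' = 0 →
      (∀ x : V, P'' (γ x) + ℓ' x • n'' = x) →
      (∀ ω χ : Dual ℝ V, ω (P'' χ) = χ (P'' ω)) →
      P'' = P' ∧ n'' = n') := by
  subst hℓ' hl2' hP' hn'
  have h' := IsNullDataInverse.gauge ⟨hγn, hℓn, hPℓ, hPγ⟩ hγsym hz ζ
  refine ⟨⟨h'.gamma_n, h'.ell_n, h'.P_ell, h'.P_gamma⟩, ?_⟩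
  intro P'' n'' hγn'' hℓn'' hPℓ'' hPγ'' hPsym''
  exact h'.unique ⟨hγn'', hℓn'', hPℓ'', hPγ''⟩ hγsym hrad hPsym''

/-- Under the gauge transformation `ℓ' = z(ℓ + γ(ζ,·))`, `ℓ⁽²⁾' = z²(ℓ⁽²⁾+2ℓ(ζ)+γ(ζ,ζ))`
(with `γ` unchanged), the tensors `P' = P - n⊗ζ - ζ⊗n` and `n' = z⁻¹ n` satisfy the four
defining contraction relations for the transformed data, and they are the unique such. -/
theorem gauge_transformation_of_P_and_n
    (γ : V →ₗ[ℝ] Dual ℝ V) (ℓ : Dual ℝ V) (l2 : ℝ) (n : V) (P : Dual ℝ V →ₗ[ℝ] V)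
    (hγsym : ∀ x y, γ x y = γ y x)
    (hrad : ∀ x : V, γ x = 0 → ∃ c : ℝ, x = c • n)
    (hγn : γ n = 0)
    (hℓn : ℓ n = 1)
    (hPsym : ∀ ω χ : Dual ℝ V, ω (P χ) = χ (P ω))
    (hPℓ : P ℓ + l2 • n = 0)
    (hPγ : ∀ x : V, P (γ x) + ℓ x • n = x)
    (z : ℝ) (hz : z ≠ 0) (ζ : V)
    -- the gauge-transformed data and the claimed transformed tensors
    (ℓ' : Dual ℝ V) (hℓ' : ℓ' = z • (ℓ + γ ζ))
    (l2' : ℝ) (hl2' : l2' = z ^ 2 * (l2 + 2 * ℓ ζ + γ ζ ζ))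
    (P' : Dual ℝ V →ₗ[ℝ] V)
    (hP' : P' = P - (Dual.eval ℝ V ζ).smulRight n - (Dual.eval ℝ V n).smulRight ζ)
    (n' : V) (hn' : n' = z⁻¹ • n) :
    -- P', n' satisfy the four defining relations for the primed data
    (γ n' = 0 ∧ ℓ' n' = 1 ∧ P' ℓ' + l2' • n' = 0 ∧ ∀ x : V, P' (γ x) + ℓ' x • n' = x) ∧
    -- and they are the unique tensors doing so
    (∀ (P'' : Dual ℝ V →ₗ[ℝ] V) (n'' : V),
      γ n'' = 0 → ℓ' n'' = 1 → P'' ℓ' + l2' • n'' = 0 →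
      (∀ x : V, P'' (γ x) + ℓ' x • n'' = x) →
      (∀ ω χ : Dual ℝ V, ω (P'' χ) = χ (P'' ω)) →
      P'' = P' ∧ n'' = n') :=
  gauge_transformation_of_P_and_n_general γ ℓ l2 n P hγsym hrad hγn hℓn hPℓ hPγ z hz ζ ℓ' hℓ' l2'
    hl2' P' hP' n' hn'
end

section
/- If T = 2n⊗_sX − QP lies in the range of the energy-momentum map τ and has gauge weight r (i.e., T' = z^rT under the gauge action), then the components transform as G_{(z,ζ)}(X) = z^{r+1}(X − Qζ) and G_{(z,ζ)}(Q) = z^rQ; conversely, these transformation laws imply T has gauge weight r. In particular, the condition Q = 0 is gauge invariant. -/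
open Module LinearMap

variable {V : Type*} [AddCommGroup V] [Module ℝ V] [FiniteDimensional ℝ V]


lemma uniq_param_aux {V : Type*} [AddCommGroup V] [Module ℝ V] [FiniteDimensional ℝ V]
    (γ : V →ₗ[ℝ] Dual ℝ V) (ℓ : Dual ℝ V) (n : V) (P : Dual ℝ V →ₗ[ℝ] V)
    (𝔫 : ℕ) (hdim : finrank ℝ V = 𝔫) (h𝔫 : 2 ≤ 𝔫)
    (hγsym : ∀ x y, γ x y = γ y x)
    (hrad : ∀ x : V, γ x = 0 → ∃ c : ℝ, x = c • n)
    (hγn : γ n = 0)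
    (hℓn : ℓ n = 1)
    (hPγ : ∀ x : V, P (γ x) + ℓ x • n = x)
    (Y : V) (c : ℝ)
    (h : ∀ ω χ : Dual ℝ V, ω n * χ Y + χ n * ω Y - c * χ (P ω) = 0) :
    Y = 0 ∧ c = 0 := by
  have hγnx : ∀ x, γ x n = 0 := fun x => by rw [← hγsym]; simp [hγn]
  have hPγx : ∀ x, P (γ x) = x - ℓ x • n := fun x => eq_sub_of_add_eq (hPγ x)
  have hγY : γ Y = 0 := by
    apply LinearMap.ext; intro x
    have h1 := h (γ x) ℓ
    rw [hγnx, hℓn, hPγx] at h1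
    simp only [map_sub, map_smul, smul_eq_mul, hℓn, mul_one] at h1
    have : γ x Y = 0 := by linarith
    rw [hγsym]; simpa using this
  have hc : c = 0 := by
    by_contra hc
    have hγ0 : ∀ x y, γ x y = 0 := by
      intro x y
      have h2 := h (γ x) (γ y)
      rw [hγnx, hγnx, hPγx] at h2
      simp only [map_sub, map_smul, smul_eq_mul, hγnx, mul_zero, zero_mul,
        zero_add, sub_zero, zero_sub, neg_eq_zero] at h2
      rcases mul_eq_zero.1 h2 with h | h
      · exact absurd h hc
      · rw [hγsym]; exact h
    have hall : ∀ w : V, ∃ cc : ℝ, cc • n = w := by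
      intro w
      obtain ⟨cc, hcc⟩ := hrad w (LinearMap.ext fun y => hγ0 w y)
      exact ⟨cc, hcc.symm⟩
    have := finrank_le_one n hall
    omega
  obtain ⟨c', hc'⟩ := hrad Y hγY
  have hℓY : ℓ Y = 0 := by
    have h3 := h ℓ ℓ
    rw [hℓn, hc] at h3
    linarith
  rw [hc', map_smul, smul_eq_mul, hℓn, mul_one] at hℓY
  exact ⟨by rw [hc', hℓY, zero_smul], hc⟩

/-- For `T = 2n⊗ₛX - QP` in the range of the energy-momentum map, `T` has gauge weight `r`
(i.e. `T' = z^r T` under the gauge action `n ↦ z⁻¹n`, `P ↦ P - 2n⊗ₛζ`) if and only if the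
components transform as `X' = z^{r+1}(X - Qζ)` and `Q' = z^r Q`.  In particular the
condition `Q = 0` is gauge invariant. -/
theorem gauge_behaviour_of_X_and_Q
    (γ : V →ₗ[ℝ] Dual ℝ V) (ℓ : Dual ℝ V) (l2 : ℝ) (n : V) (P : Dual ℝ V →ₗ[ℝ] V)
    (𝔫 : ℕ) (hdim : finrank ℝ V = 𝔫) (h𝔫 : 2 ≤ 𝔫)
    (hγsym : ∀ x y, γ x y = γ y x)
    (hrad : ∀ x : V, γ x = 0 → ∃ c : ℝ, x = c • n)
    (hγn : γ n = 0)
    (hℓn : ℓ n = 1)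
    (hPsym : ∀ ω χ : Dual ℝ V, ω (P χ) = χ (P ω))
    (hPℓ : P ℓ + l2 • n = 0)
    (hPγ : ∀ x : V, P (γ x) + ℓ x • n = x)
    (z : ℝ) (hz : z ≠ 0) (ζ : V) (r : ℤ)
    (P' : Dual ℝ V →ₗ[ℝ] V)
    (hP' : P' = P - (Dual.eval ℝ V ζ).smulRight n - (Dual.eval ℝ V n).smulRight ζ)
    (n' : V) (hn' : n' = z⁻¹ • n)
    (X X' : V) (Q Q' : ℝ) :
    ((∀ ω χ : Dual ℝ V,
        ω n' * χ X' + χ n' * ω X' - Q' * χ (P' ω)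
          = z ^ r * (ω n * χ X + χ n * ω X - Q * χ (P ω))) ↔
      (X' = (z ^ (r + 1) : ℝ) • (X - Q • ζ) ∧ Q' = z ^ r * Q)) ∧
    ((∀ ω χ : Dual ℝ V,
        ω n' * χ X' + χ n' * ω X' - Q' * χ (P' ω)
          = z ^ r * (ω n * χ X + χ n * ω X - Q * χ (P ω))) →
      (Q = 0 ↔ Q' = 0)) := by
  have e1 : (z⁻¹ * z ^ (r + 1) : ℝ) = z ^ r := by
    rw [zpow_add_one₀ hz]; field_simp
  have main : (∀ ω χ : Dual ℝ V,
        ω n' * χ X' + χ n' * ω X' - Q' * χ (P' ω)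
          = z ^ r * (ω n * χ X + χ n * ω X - Q * χ (P ω))) ↔
      (X' = (z ^ (r + 1) : ℝ) • (X - Q • ζ) ∧ Q' = z ^ r * Q) := by
    constructor
    · intro h
      set A : V := z⁻¹ • X' + Q' • ζ - (z ^ r : ℝ) • X with hA
      have key := uniq_param_aux γ ℓ n P 𝔫 hdim h𝔫 hγsym hrad hγn hℓn hPγ
        A (Q' - z ^ r * Q) ?_
      · obtain ⟨hA0, hc0⟩ := key
        have hQ'' : Q' = z ^ r * Q := by linarith [hc0]
        refine ⟨?_, hQ''⟩
        have h4 : z⁻¹ • X' = (z ^ r : ℝ) • X - Q' • ζ :=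
          eq_sub_of_add_eq (sub_eq_zero.mp (by rw [← hA]; exact hA0) ▸ rfl)
        apply smul_right_injective V (inv_ne_zero hz)
        show z⁻¹ • X' = z⁻¹ • ((z ^ (r + 1) : ℝ) • (X - Q • ζ))
        rw [h4, smul_smul, e1, smul_sub, smul_smul, hQ'']
      · intro ω χ
        have h1 := h ω χ
        rw [hn', hP'] at h1
        simp only [map_smul, smul_eq_mul, LinearMap.sub_apply,
          LinearMap.smulRight_apply, Dual.eval_apply, map_sub] at h1
        simp only [hA, map_add, map_sub, map_smul, smul_eq_mul]
        linear_combination h1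
    · rintro ⟨hX', hQ''⟩ ω χ
      rw [hn', hP', hX', hQ'']
      simp only [map_smul, smul_eq_mul, LinearMap.sub_apply,
        LinearMap.smulRight_apply, Dual.eval_apply, map_sub]
      rw [zpow_add_one₀ hz]
      field_simp
      ring
  refine ⟨main, fun h => ?_⟩
  have hQ'' := (main.mp h).2
  constructor
  · intro hQ; rw [hQ'', hQ, mul_zero]
  · intro hQ'; rw [hQ''] at hQ'
    exact (mul_eq_zero.mp hQ').resolve_left (zpow_ne_zero _ hz)
end
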